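/- arXiv:2205.10730 — 4 statements merged into one kernel-verified Lean document; each statement's English description precedes it below -/
import Mathlib

section
/- If 2ν + δ = 2 (i.e., (ν, δ) = (1, 0) or (ν, δ) = (0, 2)), then the orthogonal inner product graph Oi(2, q) is not connected. -/
open Matrix

/-- The Gram matrix `S` of the `(2ν+δ)`-dimensional orthogonal space over `F`
(with `Δ = ∅`, `(1)`, or `diag(1, -z)` according to `δ = 0, 1, 2`). -/
def oiMat (F : Type*) [Field F] (ν δ : ℕ) (z : F) :
    Matrix (Fin (2*ν+δ)) (Fin (2*ν+δ)) F :=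
  Matrix.of fun i j =>
    if (i : ℕ) < ν ∧ (j : ℕ) = (i : ℕ) + ν then 1
    else if (j : ℕ) < ν ∧ (i : ℕ) = (j : ℕ) + ν then 1
    else if (i : ℕ) = (j : ℕ) ∧ (i : ℕ) = 2*ν then 1
    else if (i : ℕ) = (j : ℕ) ∧ (i : ℕ) = 2*ν + 1 then -z
    else 0

/-- The vertices of the orthogonal inner product graph: nontrivial subspaces of `F^n`. -/
abbrev OiVertex (F : Type*) [Field F] (n : ℕ) :=
  {W : Submodule F (Fin n → F) // W ≠ ⊥ ∧ W ≠ ⊤}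

/-- The orthogonal inner product graph `Oi(n, q)` with respect to the symmetric matrix `S`. -/
def oiGraph (F : Type*) [Field F] (n : ℕ) (S : Matrix (Fin n) (Fin n) F) :
    SimpleGraph (OiVertex F n) where
  Adj A B := A ≠ B ∧ (∀ a ∈ A.1, ∀ b ∈ B.1, a ⬝ᵥ (S *ᵥ b) = 0)
      ∧ (∀ a ∈ B.1, ∀ b ∈ A.1, a ⬝ᵥ (S *ᵥ b) = 0)
  symm := ⟨fun A B h => ⟨h.1.symm, h.2.2, h.2.1⟩⟩
  loopless := ⟨fun A h => h.1 rfl⟩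

/-- Two subspaces of `F^n` are of the same type if they have the same dimension and the
restrictions of the bilinear form `(x, y) ↦ x S yᵀ` to them are isometric. -/
def SameType {F : Type*} [Field F] {n : ℕ} (S : Matrix (Fin n) (Fin n) F)
    (A B : Submodule F (Fin n → F)) : Prop :=
  ∃ e : A ≃ₗ[F] B,
    ∀ x y : A, ((x : Fin n → F) ⬝ᵥ (S *ᵥ (y : Fin n → F))) =
      ((e x : Fin n → F) ⬝ᵥ (S *ᵥ ((e y : Fin n → F))))

/-!
For `n = 2` the Gram matrix is nondegenerate (its determinant is `-1` or `-z`), so every vertex is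
a line `L` and any neighbour of `L` lies in the line `L^⊥`: each vertex has at most one neighbour.
A graph of maximum degree one on at least three vertices is disconnected.
-/

open Module

namespace SimpleGraph

variable {V : Type*} {G : SimpleGraph V}

lemma Reachable.mem_of_forall_adj_mem {s : Set V} (hs : ∀ ⦃x y⦄, x ∈ s → G.Adj x y → y ∈ s)
    {u v : V} (huv : G.Reachable u v) (hu : u ∈ s) : v ∈ s := by
  obtain ⟨w⟩ := huv
  induction w with
  | nil => exact hu
  | cons h _ ih => exact ih (hs hu h)

lemma not_connected_of_adj_unique (huniq : ∀ ⦃x y y'⦄, G.Adj x y → G.Adj x y' → y = y')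
    {a b c : V} (hab : a ≠ b) (hac : a ≠ c) (hbc : b ≠ c) : ¬ G.Connected := by
  intro hG
  let s : Set V := {x | x = a ∨ G.Adj a x}
  have hs : ∀ ⦃x y⦄, x ∈ s → G.Adj x y → y ∈ s := by
    rintro x y (rfl | hax) hxy
    · exact Or.inr hxy
    · exact Or.inl (huniq hax.symm hxy).symm
  have hmem : ∀ x, x ∈ s := fun x => (hG.preconnected a x).mem_of_forall_adj_mem hs (Or.inl rfl)
  by_cases hadj : G.Adj a b
  · rcases hmem c with rfl | hac'
    · exact hac rfl
    · exact hbc (huniq hadj hac')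
  · rcases hmem b with rfl | hab'
    · exact hab rfl
    · exact hadj hab'

end SimpleGraph

section Plane

variable {F : Type*} [Field F]

lemma le_ker_of_oiGraph_adj {n : ℕ} {S : Matrix (Fin n) (Fin n) F} {A B : OiVertex F n}
    (h : (oiGraph F n S).Adj A B) {a : Fin n → F} (ha : a ∈ A.1) :
    B.1 ≤ LinearMap.ker (dotProductEquiv F (Fin n) (a ᵥ* S)) := fun b hb => by
  simpa [dotProduct_mulVec] using h.2.1 a ha b hb

lemma oiGraph_adj_unique {S : Matrix (Fin 2) (Fin 2) F} (hS : S.det ≠ 0) {A B B' : OiVertex F 2}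
    (h : (oiGraph F 2 S).Adj A B) (h' : (oiGraph F 2 S).Adj A B') : B = B' := by
  obtain ⟨a, ha, ha0⟩ := Submodule.exists_mem_ne_zero_of_ne_bot A.2.1
  set K := LinearMap.ker (dotProductEquiv F (Fin 2) (a ᵥ* S))
  have hK : finrank F K = 1 := by
    have hw : a ᵥ* S ≠ 0 := fun hw => hS (exists_vecMul_eq_zero_iff.mp ⟨a, ha0, hw⟩)
    have hf := (dotProductEquiv F (Fin 2)).map_ne_zero_iff.mpr hw
    have hrank := Dual.finrank_ker_add_one_of_ne_zero hf
    rw [finrank_fin_fun] at hrank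
    exact Nat.add_right_cancel (m := 1) hrank
  have heq : ∀ C : OiVertex F 2, C.1 ≤ K → C.1 = K := fun C hC =>
    Submodule.eq_of_le_of_finrank_le hC
      (hK ▸ Submodule.one_le_finrank_iff.mpr C.2.1)
  exact Subtype.ext ((heq B (le_ker_of_oiGraph_adj h ha)).trans
    (heq B' (le_ker_of_oiGraph_adj h' ha)).symm)

def lineVertex (v : Fin 2 → F) (hv : v ≠ 0) : OiVertex F 2 :=
  ⟨F ∙ v, by simpa using hv, fun h => by
    have := finrank_span_singleton (K := F) hv
    rw [h, finrank_top, finrank_fin_fun] at this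
    omega⟩

lemma exists_smul_eq_of_lineVertex_eq {v w : Fin 2 → F} {hv : v ≠ 0} {hw : w ≠ 0}
    (h : lineVertex v hv = lineVertex w hw) : ∃ u : Fˣ, u • v = w :=
  Submodule.span_singleton_eq_span_singleton.mp (congrArg Subtype.val h)

lemma exists_three_oiVertex : ∃ a b c : OiVertex F 2, a ≠ b ∧ a ≠ c ∧ b ≠ c := by
  refine ⟨lineVertex ![1, 0] (by simp), lineVertex ![0, 1] (by simp),
    lineVertex ![1, 1] (by simp), ?_, ?_, ?_⟩ <;>
  · intro h
    obtain ⟨u, hu⟩ := exists_smul_eq_of_lineVertex_eq h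
    have := congrFun hu 0
    have := congrFun hu 1
    simp_all

lemma not_connected_oiGraph_two {S : Matrix (Fin 2) (Fin 2) F} (hS : S.det ≠ 0) :
    ¬ (oiGraph F 2 S).Connected := by
  obtain ⟨a, b, c, hab, hac, hbc⟩ := exists_three_oiVertex (F := F)
  exact SimpleGraph.not_connected_of_adj_unique (fun _ _ _ => oiGraph_adj_unique hS) hab hac hbc

end Plane

theorem stmt0_general (F : Type*) [Field F]
    (ν δ : ℕ) (hn : 2*ν + δ = 2) (z : F) (hz : ¬ IsSquare z) :
    ¬ (oiGraph F (2*ν+δ) (oiMat F ν δ z)).Connected := by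
  have hz0 : z ≠ 0 := fun h => hz (h ▸ IsSquare.zero)
  obtain ⟨rfl, rfl⟩ | ⟨rfl, rfl⟩ : (ν = 1 ∧ δ = 0) ∨ (ν = 0 ∧ δ = 2) := by omega
  · exact not_connected_oiGraph_two (by simp [oiMat, det_fin_two])
  · exact not_connected_oiGraph_two (by simp [oiMat, det_fin_two, hz0])

/-- If `2ν + δ = 2`, the orthogonal inner product graph `Oi(2, q)` is not connected. -/
theorem stmt0 (F : Type*) [Field F] [Fintype F] (hF : ringChar F ≠ 2)
    (ν δ : ℕ) (hδ : δ ≤ 2) (hn : 2*ν + δ = 2) (z : F) (hz : ¬ IsSquare z) :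
    ¬ (oiGraph F (2*ν+δ) (oiMat F ν δ z)).Connected :=
  stmt0_general F ν δ hn z hz
end

section
/- For every automorphism σ of Oi(n, q) and every vertex X of Oi(n, q) with dim X = 1, the vertex σ(X) also has dimension 1; consequently σ maps the set of 1-dimensional vertices bijectively onto itself. -/
open Matrix

/-! The degree of a vertex `X` of dimension `k` is pinned down up to `2`: its neighbours are
subspaces of `X^⊥`, which has dimension `n - k`, and every nontrivial subspace of `X^⊥` other
than `X` is one. The number `N(m)` of subspaces of `F^m` grows by at least `3` with each
dimension, so `N(n - 1) - 2 > N(n - k)` for `k ≥ 2`: vertices of dimension `1` have larger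
degree than all other vertices, and automorphisms preserve degrees. -/

open Module

instance {F V : Type*} [Field F] [Finite F] [AddCommGroup V] [Module F V]
    [FiniteDimensional F V] : Finite (Submodule F V) :=
  have : Finite V := Module.finite_of_finite F
  Finite.of_injective _ SetLike.coe_injective

section SubspaceCount

variable (F : Type*) [Field F]

/-- The number of subspaces of `F^m`, or `0` when there are infinitely many. -/
noncomputable def subspaceCount (m : ℕ) : ℕ := Nat.card (Submodule F (Fin m → F))

variable {F} {V : Type*} [AddCommGroup V] [Module F V]

theorem Submodule.card_Iic_eq_subspaceCount (W : Submodule F V) [FiniteDimensional F W] :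
    Nat.card (Set.Iic W) = subspaceCount F (finrank F W) :=
  calc Nat.card (Set.Iic W) = Nat.card (Submodule F W) :=
        Nat.card_congr (Submodule.MapSubtype.orderIso W).symm.toEquiv
    _ = subspaceCount F (finrank F W) :=
        Nat.card_congr (Submodule.orderIsoMapComap (LinearEquiv.ofFinrankEq W (Fin (finrank F W) → F)
          (finrank_fin_fun F).symm)).toEquiv

/-- Beyond the subspaces of `W`, the space `V` contains `⊤`, `⟨u⟩` and `⟨u + w⟩`
for any `u ∉ W` and `0 ≠ w ∈ W`. -/
theorem Submodule.card_Iic_add_three_le [Finite F] [FiniteDimensional F V] {W : Submodule F V}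
    (hW₀ : W ≠ ⊥) (hW : W ≠ ⊤) : Nat.card (Set.Iic W) + 3 ≤ Nat.card (Submodule F V) := by
  obtain ⟨w, hwW, hw₀⟩ := W.ne_bot_iff.1 hW₀
  obtain ⟨u, -, huW⟩ := SetLike.exists_of_lt (lt_top_iff_ne_top.2 hW)
  have huwW : u + w ∉ W := fun h => huW (by simpa using W.sub_mem h hwW)
  have hw_span : ∀ x ∉ W, w ∉ Submodule.span F {x} := by
    intro x hxW hwx
    obtain ⟨c, rfl⟩ := Submodule.mem_span_singleton.1 hwx
    have hc : c ≠ 0 := by rintro rfl; exact hw₀ (zero_smul F x)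
    exact hxW (by simpa [hc] using W.smul_mem c⁻¹ hwW)
  have hu_ne : Submodule.span F {u} ≠ Submodule.span F {u + w} := fun h => by
    have huw : u + w ∈ Submodule.span F {u} := by
      rw [h]; exact Submodule.mem_span_singleton_self _
    exact hw_span u huW (by
      simpa using Submodule.sub_mem _ huw (Submodule.mem_span_singleton_self u))
  have htop_ne : ∀ x ∉ W, ⊤ ≠ Submodule.span F {x} := fun x hx h =>
    hw_span x hx (h ▸ Submodule.mem_top)
  set T : Set (Submodule F V) := {⊤, Submodule.span F {u}, Submodule.span F {u + w}}
  have hT : T.ncard = 3 :=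
    Set.ncard_eq_three.2 ⟨_, _, _, htop_ne u huW, htop_ne _ huwW, hu_ne, rfl⟩
  have hdisj : Disjoint (Set.Iic W) T := by
    refine Set.disjoint_left.2 fun C (hCW : C ≤ W) hCT => ?_
    rcases hCT with rfl | rfl | rfl
    · exact hW (top_le_iff.1 hCW)
    · exact huW (hCW (Submodule.mem_span_singleton_self u))
    · exact huwW (hCW (Submodule.mem_span_singleton_self _))
  calc Nat.card (Set.Iic W) + 3 = (Set.Iic W ∪ T).ncard := by
        rw [Set.ncard_union_eq hdisj, hT, Nat.card_coe_set_eq]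
    _ ≤ Nat.card (Submodule F V) := by
        rw [← Set.ncard_univ]; exact Set.ncard_le_ncard (Set.subset_univ _)

theorem subspaceCount_add_three_le [Finite F] {m k : ℕ} (hm : 1 ≤ m) (hmk : m < k) :
    subspaceCount F m + 3 ≤ subspaceCount F k := by
  obtain ⟨f, hf⟩ := exists_linearIndependent_of_le_finrank (R := F) (n := m) (M := Fin k → F)
    (by rw [finrank_fin_fun]; exact hmk.le)
  set W := Submodule.span F (Set.range f)
  have hW : finrank F W = m := by rw [finrank_span_eq_card hf, Fintype.card_fin]
  have hW₀ : W ≠ ⊥ := fun h => by rw [h, finrank_bot] at hW; omega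
  have hW_top : W ≠ ⊤ := fun h => by rw [h, finrank_top, finrank_fin_fun] at hW; omega
  have := Submodule.card_Iic_add_three_le hW₀ hW_top
  rwa [W.card_Iic_eq_subspaceCount, hW] at this

end SubspaceCount

section OiMat

variable {F : Type*} [Field F] {ν δ : ℕ} {z : F}

theorem oiMat_isSymm : (oiMat F ν δ z).IsSymm :=
  Matrix.IsSymm.ext fun i j => by
    simp only [oiMat, Matrix.of_apply]
    split_ifs <;> first | rfl | omega

theorem exists_oiMat_col_eq_single (hδ : δ ≤ 2) (hz : z ≠ 0) (i : Fin (2*ν+δ)) :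
    ∃ j, ∃ c ≠ 0, (oiMat F ν δ z).col j = Pi.single i c := by
  refine ⟨⟨if (i : ℕ) < ν then i + ν else if (i : ℕ) < 2*ν then i - ν else i,
    by split_ifs <;> omega⟩, if (i : ℕ) = 2*ν+1 then -z else 1,
    by split_ifs <;> simp [hz], ?_⟩
  funext k
  simp only [Matrix.col_apply, oiMat, Matrix.of_apply, Pi.single_apply, Fin.ext_iff]
  split_ifs <;> first | rfl | omega

theorem oiMat_nondegenerate (hδ : δ ≤ 2) (hz : z ≠ 0) : (oiMat F ν δ z).Nondegenerate := by
  have hL : (oiMat F ν δ z).SeparatingLeft := fun v hv => funext fun i => by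
    obtain ⟨j, c, hc, hcol⟩ := exists_oiMat_col_eq_single hδ hz i
    simpa [Matrix.mulVec_single_one, hcol, hc] using hv (Pi.single j 1)
  refine ⟨hL, ?_⟩
  rw [← Matrix.separatingLeft_transpose_iff, oiMat_isSymm.eq]
  exact hL

end OiMat

section OiGraph

variable {F : Type*} [Field F] {n : ℕ}

theorem OiVertex.one_le_finrank (X : OiVertex F n) : 1 ≤ finrank F X.1 :=
  Nat.one_le_iff_ne_zero.2 fun h => X.2.1 (Submodule.finrank_eq_zero.1 h)

theorem OiVertex.finrank_lt (X : OiVertex F n) : finrank F X.1 < n := by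
  simpa using Submodule.finrank_lt X.2.2

variable {S : Matrix (Fin n) (Fin n) F}

theorem oiGraph_adj_iff (hS : (Matrix.toBilin' S).IsRefl) {X Y : OiVertex F n} :
    (oiGraph F n S).Adj X Y ↔ X ≠ Y ∧ Y.1 ≤ (Matrix.toBilin' S).orthogonal X.1 := by
  have hY_le : Y.1 ≤ (Matrix.toBilin' S).orthogonal X.1 ↔
      ∀ a ∈ X.1, ∀ b ∈ Y.1, a ⬝ᵥ S *ᵥ b = 0 := by
    simp only [SetLike.le_def, LinearMap.BilinForm.mem_orthogonal_iff,
      Matrix.toBilin'_apply']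
    exact forall₂_comm
  rw [hY_le]
  refine ⟨fun h => ⟨h.1, h.2.1⟩, fun h => ⟨h.1, h.2, fun a ha b hb => ?_⟩⟩
  simpa only [Matrix.toBilin'_apply'] using
    hS b a (by simpa only [Matrix.toBilin'_apply'] using h.2 b hb a ha)

theorem finrank_orthogonal_oiVertex (hS : (Matrix.toBilin' S).Nondegenerate) (X : OiVertex F n) :
    finrank F ((Matrix.toBilin' S).orthogonal X.1) = n - finrank F X.1 := by
  rw [LinearMap.BilinForm.finrank_orthogonal hS, finrank_fin_fun]

variable [Finite F]

theorem oiGraph_card_neighborSet_le (hS : (Matrix.toBilin' S).IsRefl)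
    (hS' : (Matrix.toBilin' S).Nondegenerate) (X : OiVertex F n) :
    Nat.card ((oiGraph F n S).neighborSet X) ≤ subspaceCount F (n - finrank F X.1) := by
  rw [← finrank_orthogonal_oiVertex hS', ← Submodule.card_Iic_eq_subspaceCount]
  refine Nat.card_le_card_of_injective (fun Y => ⟨Y.1.1, ((oiGraph_adj_iff hS).1 Y.2).2⟩) ?_
  exact fun Y Y' h => Subtype.ext <| Subtype.ext <| by simpa using congrArg Subtype.val h

/-- Every subspace of `X^⊥` other than `0` and `X` is a neighbour of `X`. -/
theorem subspaceCount_le_oiGraph_card_neighborSet_add_two (hS : (Matrix.toBilin' S).IsRefl)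
    (hS' : (Matrix.toBilin' S).Nondegenerate) (X : OiVertex F n) :
    subspaceCount F (n - finrank F X.1) ≤ Nat.card ((oiGraph F n S).neighborSet X) + 2 := by
  set P := (Matrix.toBilin' S).orthogonal X.1 with hP_def
  have hP_dim : finrank F P = n - finrank F X.1 := finrank_orthogonal_oiVertex hS' X
  have hP_top : P ≠ ⊤ := fun h => by
    rw [h, finrank_top, finrank_fin_fun] at hP_dim
    have := X.one_le_finrank
    have := X.finrank_lt
    omega
  have hcover : Set.Iic P ⊆ Subtype.val '' ((oiGraph F n S).neighborSet X) ∪ {⊥, X.1} := by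
    intro C (hC : C ≤ P)
    by_cases hC' : C = ⊥ ∨ C = X.1
    · exact Or.inr hC'
    · push Not at hC'
      have hC_top : C ≠ ⊤ := fun h => hP_top (top_le_iff.1 (h ▸ hC))
      refine Or.inl ⟨⟨C, hC'.1, hC_top⟩, (oiGraph_adj_iff hS).2 ⟨?_, hC⟩, rfl⟩
      exact fun h => hC'.2 (congrArg Subtype.val h).symm
  rw [← hP_dim, ← Submodule.card_Iic_eq_subspaceCount, Nat.card_coe_set_eq, Nat.card_coe_set_eq]
  calc (Set.Iic P).ncard
      ≤ (Subtype.val '' ((oiGraph F n S).neighborSet X) ∪ {⊥, X.1}).ncard :=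
        Set.ncard_le_ncard hcover
    _ ≤ (Subtype.val '' ((oiGraph F n S).neighborSet X)).ncard + ({⊥, X.1} : Set _).ncard :=
        Set.ncard_union_le _ _
    _ ≤ ((oiGraph F n S).neighborSet X).ncard + 2 := by
        rw [Set.ncard_image_of_injective _ Subtype.val_injective]
        exact Nat.add_le_add_left ((Set.ncard_insert_le _ _).trans (by rw [Set.ncard_singleton])) _

theorem oiGraph_iso_finrank_eq_one (hS : (Matrix.toBilin' S).IsRefl)
    (hS' : (Matrix.toBilin' S).Nondegenerate) (σ : oiGraph F n S ≃g oiGraph F n S)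
    {X : OiVertex F n} (hX : finrank F X.1 = 1) : finrank F (σ X).1 = 1 := by
  by_contra hσX
  have h₁ := (σ X).one_le_finrank
  have h₂ := (σ X).finrank_lt
  have hdeg := Nat.card_congr (σ.mapNeighborSet X)
  have := subspaceCount_add_three_le (F := F)
    (m := n - finrank F (σ X).1) (k := n - 1) (by omega) (by omega)
  have := subspaceCount_le_oiGraph_card_neighborSet_add_two hS hS' X
  have := oiGraph_card_neighborSet_le hS hS' (σ X)
  rw [hX] at *
  omega

end OiGraph

theorem stmt3_general (F : Type*) [Field F] [Fintype F]
    (ν δ : ℕ) (hδ : δ ≤ 2) (z : F) (hz : ¬ IsSquare z)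
    (σ : (oiGraph F (2*ν+δ) (oiMat F ν δ z)) ≃g (oiGraph F (2*ν+δ) (oiMat F ν δ z))) :
    (∀ X : OiVertex F (2*ν+δ),
        Module.finrank F X.1 = 1 → Module.finrank F (σ X).1 = 1) ∧
      Set.BijOn (fun X => σ X)
        {X : OiVertex F (2*ν+δ) | Module.finrank F X.1 = 1}
        {X : OiVertex F (2*ν+δ) | Module.finrank F X.1 = 1} := by
  have hz₀ : z ≠ 0 := by rintro rfl; exact hz IsSquare.zero
  have hS : (Matrix.toBilin' (oiMat F ν δ z)).IsRefl :=
    (Matrix.isSymm_toBilin'_iff_isSymm.2 oiMat_isSymm).isRefl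
  have hS' : (Matrix.toBilin' (oiMat F ν δ z)).Nondegenerate :=
    (oiMat_nondegenerate hδ hz₀).toBilin'
  have key := fun τ X => oiGraph_iso_finrank_eq_one hS hS' τ (X := X)
  exact ⟨fun X => key σ X, σ.toEquiv.bijOn' (fun X => key σ X) (fun X => key σ.symm X)⟩

/-- Every automorphism of `Oi(n, q)` maps 1-dimensional vertices to 1-dimensional vertices,
and hence maps the set of 1-dimensional vertices bijectively onto itself. -/
theorem stmt3 (F : Type*) [Field F] [Fintype F] (hF : ringChar F ≠ 2)
    (ν δ : ℕ) (hδ : δ ≤ 2) (hn : 2 ≤ 2*ν + δ) (z : F) (hz : ¬ IsSquare z)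
    (σ : (oiGraph F (2*ν+δ) (oiMat F ν δ z)) ≃g (oiGraph F (2*ν+δ) (oiMat F ν δ z))) :
    (∀ X : OiVertex F (2*ν+δ),
        Module.finrank F X.1 = 1 → Module.finrank F (σ X).1 = 1) ∧
      Set.BijOn (fun X => σ X)
        {X : OiVertex F (2*ν+δ) | Module.finrank F X.1 = 1}
        {X : OiVertex F (2*ν+δ) | Module.finrank F X.1 = 1} :=
  stmt3_general F ν δ hδ z hz σ
end

section
/- For T₁, T₂ in the orthogonal group O_n(F), one has W·T₁ = W·T₂ for every nontrivial subspace W of F^n if and only if T₁ = T₂ or T₁ = −T₂. -/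
/-!
Since `S` is nondegenerate, `T * S * Tᵀ = S` forces `T` to be invertible. If `T₁` and `T₂`
move every line in the same way, then `T₂⁻¹ T₁` fixes every line and is therefore a scalar `c`,
so `T₁ = c • T₂`; as `c • T₂` is again orthogonal and `S ≠ 0`, `c² = 1`.
-/

open Matrix

namespace LinearMap

variable {K V : Type*} [Field K] [AddCommGroup V] [Module K V]

theorem exists_eq_smul_of_forall_mem_span_singleton [FiniteDimensional K V] {f g : V →ₗ[K] V}
    (hg : Function.Injective g) (h : ∀ v, f v ∈ K ∙ g v) : ∃ c : K, f = c • g := by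
  let e := LinearEquiv.ofInjectiveEndo g hg
  obtain ⟨c, hc⟩ := (f ∘ₗ e.symm.toLinearMap).exists_eq_smul_id_of_forall_notLinearIndependent
    fun w => by
      obtain ⟨a, ha⟩ := Submodule.mem_span_singleton.1 (h (e.symm w))
      have hw : g (e.symm w) = w := e.apply_symm_apply w
      rcases eq_or_ne w 0 with rfl | hw0
      · exact fun hli => hli.ne_zero 0 rfl
      · rw [LinearIndependent.pair_iff' hw0, not_forall_not]
        exact ⟨a, by simpa [hw] using ha⟩
  refine ⟨c, LinearMap.ext fun v => ?_⟩
  have hv : e.symm (g v) = v := e.symm_apply_apply v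
  simpa [hv] using LinearMap.congr_fun hc (g v)

theorem exists_eq_smul_of_forall_map_eq [FiniteDimensional K V] (hV : 1 < Module.finrank K V)
    {f g : V →ₗ[K] V} (hg : Function.Injective g)
    (h : ∀ W : Submodule K V, W ≠ ⊥ → W ≠ ⊤ → W.map f = W.map g) : ∃ c : K, f = c • g := by
  refine exists_eq_smul_of_forall_mem_span_singleton hg fun v => ?_
  rcases eq_or_ne v 0 with rfl | hv
  · simp
  have hline : (K ∙ v).map f = (K ∙ v).map g :=
    h _ (by simpa using hv) fun htop => by
      have := finrank_span_singleton (K := K) hv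
      rw [htop, finrank_top] at this
      omega
  simp only [Submodule.map_span, Set.image_singleton] at hline
  exact hline ▸ Submodule.mem_span_singleton_self _

end LinearMap

namespace Matrix

variable {ι R : Type*} [Fintype ι]

theorem vecMul_injective_of_forall_exists_col [NonUnitalNonAssocSemiring R]
    [IsRightCancelMulZero R] {M : Matrix ι ι R}
    (h : ∀ i, ∃ j, M i j ≠ 0 ∧ ∀ k ≠ i, M k j = 0) : Function.Injective M.vecMul := by
  intro v w hvw
  funext i
  obtain ⟨j, hij, hcol⟩ := h i
  have hj := congrFun hvw j
  simp only [vecMul, dotProduct] at hj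
  rwa [Finset.sum_eq_single i (fun k _ hk => by rw [hcol k hk, mul_zero]) (by simp),
    Finset.sum_eq_single i (fun k _ hk => by rw [hcol k hk, mul_zero]) (by simp),
    mul_left_inj' hij] at hj

theorem vecMul_injective_of_mul_mul_transpose_eq [NonUnitalSemiring R] {S T : Matrix ι ι R}
    (hS : Function.Injective S.vecMul) (hT : T * S * Tᵀ = S) : Function.Injective T.vecMul := by
  have : Function.Injective (T * (S * Tᵀ)).vecMul := by rwa [← Matrix.mul_assoc, hT]
  refine .of_comp (f := (S * Tᵀ).vecMul) ?_
  simpa only [Function.comp_def, vecMul_vecMul] using this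

theorem mul_self_eq_one_of_smul_mul_mul_transpose_eq [Field R] {S T : Matrix ι ι R} {c : R}
    (hS : S ≠ 0) (hT : T * S * Tᵀ = S) (hcT : (c • T) * S * (c • T)ᵀ = S) : c * c = 1 := by
  have : (c * c - 1) • S = 0 := by
    rw [sub_smul, one_smul, sub_eq_zero]
    calc (c * c) • S = (c * c) • (T * S * Tᵀ) := by rw [hT]
      _ = (c • T) * S * (c • T)ᵀ := by
        rw [transpose_smul, smul_mul, smul_mul, Matrix.mul_smul, smul_smul]
      _ = S := hcT
  exact sub_eq_zero.1 ((smul_eq_zero.1 this).resolve_right hS)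

end Matrix

lemma oiMat_exists_col {F : Type*} [Field F] {ν δ : ℕ} {z : F} (hδ : δ ≤ 2) (hz : z ≠ 0)
    (i : Fin (2*ν+δ)) :
    ∃ j, oiMat F ν δ z i j ≠ 0 ∧ ∀ k ≠ i, oiMat F ν δ z k j = 0 := by
  have hi := i.isLt
  -- `j` is the partner of `i` in the hyperbolic pairs `(i, i + ν)`, or `i` itself when `2ν ≤ i`
  refine ⟨⟨if (i : ℕ) < ν then i + ν else if (i : ℕ) < 2 * ν then i - ν else i,
    by split_ifs <;> omega⟩, ?_, fun k hk => ?_⟩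
  · simp only [oiMat, of_apply]
    split_ifs <;> first | exact one_ne_zero | exact neg_ne_zero.2 hz | omega
  · have hk' : (k : ℕ) ≠ i := Fin.val_ne_of_ne hk
    have := k.isLt
    simp only [oiMat, of_apply]
    split_ifs <;> first | rfl | omega

theorem stmt5_general (F : Type*) [Field F]
    (ν δ : ℕ) (hδ : δ ≤ 2) (hn : 2 ≤ 2*ν + δ) (z : F) (hz : ¬ IsSquare z)
    (T₁ T₂ : Matrix (Fin (2*ν+δ)) (Fin (2*ν+δ)) F)
    (hT₁ : T₁ * oiMat F ν δ z * T₁ᵀ = oiMat F ν δ z)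
    (hT₂ : T₂ * oiMat F ν δ z * T₂ᵀ = oiMat F ν δ z) :
    (∀ W : Submodule F (Fin (2*ν+δ) → F), W ≠ ⊥ → W ≠ ⊤ →
        W.map (Matrix.vecMulLinear T₁) = W.map (Matrix.vecMulLinear T₂)) ↔
      (T₁ = T₂ ∨ T₁ = -T₂) := by
  have hz0 : z ≠ 0 := by rintro rfl; exact hz .zero
  have hcol := oiMat_exists_col (ν := ν) hδ hz0
  constructor
  · intro hW
    have hT₂inj := vecMul_injective_of_mul_mul_transpose_eq
      (vecMul_injective_of_forall_exists_col hcol) hT₂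
    obtain ⟨c, hc⟩ := LinearMap.exists_eq_smul_of_forall_map_eq
      (by rw [Module.finrank_fin_fun]; omega) hT₂inj hW
    have hT : T₁ = c • T₂ := vecMul_injective (funext fun v => by
      simpa [vecMul_smul] using LinearMap.congr_fun hc v)
    have hS : oiMat F ν δ z ≠ 0 := by
      obtain ⟨j, hj, -⟩ := hcol ⟨0, by omega⟩
      exact fun h => hj (by simp [h])
    rcases mul_self_eq_one_iff.1 (mul_self_eq_one_of_smul_mul_mul_transpose_eq hS hT₂ (hT ▸ hT₁))
      with rfl | rfl <;> simp [hT]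
  · rintro (rfl | rfl) W - -
    · rfl
    · have hneg : (-T₂).vecMulLinear = -T₂.vecMulLinear := LinearMap.ext fun v => vecMul_neg v T₂
      rw [hneg, Submodule.map_neg]

/-- For `T₁, T₂` in the orthogonal group `O_n(F)`, `W·T₁ = W·T₂` for every nontrivial
subspace `W` of `F^n` iff `T₁ = T₂` or `T₁ = -T₂`. -/
theorem stmt5 (F : Type*) [Field F] [Fintype F] (hF : ringChar F ≠ 2)
    (ν δ : ℕ) (hδ : δ ≤ 2) (hn : 2 ≤ 2*ν + δ) (z : F) (hz : ¬ IsSquare z)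
    (T₁ T₂ : Matrix (Fin (2*ν+δ)) (Fin (2*ν+δ)) F)
    (hT₁ : T₁ * oiMat F ν δ z * T₁ᵀ = oiMat F ν δ z)
    (hT₂ : T₂ * oiMat F ν δ z * T₂ᵀ = oiMat F ν δ z) :
    (∀ W : Submodule F (Fin (2*ν+δ) → F), W ≠ ⊥ → W ≠ ⊤ →
        W.map (Matrix.vecMulLinear T₁) = W.map (Matrix.vecMulLinear T₂)) ↔
      (T₁ = T₂ ∨ T₁ = -T₂) :=
  stmt5_general F ν δ hδ hn z hz T₁ T₂ hT₁ hT₂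
end

section
/- Let ν ≥ 2 and δ = 0, so n = 2ν. Every automorphism τ of Oi(2ν, q) can be written as τ = σ_T ∘ ρ, where T ∈ O_{2ν}(F), σ_T is the automorphism W ↦ W·T, and ρ is an automorphism of Oi(2ν, q) satisfying ρ([e_i]) = [e_i] and ρ([f_i]) = [f_i] for all 1 ≤ i ≤ ν. -/
open Matrix

/-! In `Oi(n, q)` say that `A` dominates `B` when every neighbour of `B` other than `A` is a
neighbour of `A`; this relation is preserved by every graph automorphism. For `n ≥ 4` it holds
exactly when `A ≤ B` or `B = Aᗮ`. Hence the lines are the vertices dominated by no other vertex,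
and a line is isotropic iff it dominates two distinct neighbours (a non-isotropic line `A` can only
dominate its neighbour `Aᗮ`). So an automorphism `τ` maps the coordinate lines `[e_j]` to lines
`[v_j]` with `v_i ⊥ v_j ↔ e_i ⊥ e_j`, for `i = j` as well. Rescaling one vector of each hyperbolic
pair `(v_i, v_{i+ν})` makes the `v_j` the rows of a matrix `T ∈ O_{2ν}(F)`, and `ρ = σ_T⁻¹ ∘ τ`
fixes every `[e_j]`. -/

namespace SimpleGraph

variable {V W : Type*} {G : SimpleGraph V} {H : SimpleGraph W}

def Dominates (G : SimpleGraph V) (a b : V) : Prop :=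
  ∀ w, G.Adj w b → G.Adj w a ∨ w = a

def IsDominationMinimal (G : SimpleGraph V) (a : V) : Prop :=
  ∀ c, G.Dominates c a → c = a

def DominatesTwoNeighbors (G : SimpleGraph V) (a : V) : Prop :=
  ∃ b₁ b₂, b₁ ≠ b₂ ∧ G.Adj a b₁ ∧ G.Adj a b₂ ∧ G.Dominates a b₁ ∧ G.Dominates a b₂

theorem Dominates.map (φ : G ≃g H) {a b : V} (h : G.Dominates a b) :
    H.Dominates (φ a) (φ b) := by
  intro w hw
  obtain ⟨w, rfl⟩ := φ.surjective w
  exact (h w (φ.map_adj_iff.1 hw)).imp φ.map_adj_iff.2 (congrArg φ)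

theorem IsDominationMinimal.map (φ : G ≃g H) {a : V} (h : G.IsDominationMinimal a) :
    H.IsDominationMinimal (φ a) := by
  intro c hc
  obtain ⟨c, rfl⟩ := φ.surjective c
  have := hc.map φ.symm
  simp only [RelIso.symm_apply_apply] at this
  rw [h c this]

theorem DominatesTwoNeighbors.map (φ : G ≃g H) {a : V} (h : G.DominatesTwoNeighbors a) :
    H.DominatesTwoNeighbors (φ a) := by
  obtain ⟨b₁, b₂, hne, hadj₁, hadj₂, hdom₁, hdom₂⟩ := h
  exact ⟨φ b₁, φ b₂, φ.injective.ne hne, φ.map_adj_iff.2 hadj₁, φ.map_adj_iff.2 hadj₂,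
    hdom₁.map φ, hdom₂.map φ⟩

end SimpleGraph

theorem Matrix.mul_mul_transpose_apply {m R : Type*} [Fintype m] [CommSemiring R]
    (T S : Matrix m m R) (i j : m) :
    (T * S * Tᵀ) i j = T i ⬝ᵥ S *ᵥ T j := by
  simp only [Matrix.mul_apply, dotProduct, Matrix.mulVec, Matrix.transpose_apply, Finset.sum_mul,
    Finset.mul_sum, mul_assoc]
  exact Finset.sum_comm

theorem Submodule.exists_eq_span_singleton_of_finrank_eq_one {K V : Type*} [Field K]
    [AddCommGroup V] [Module K V] {W : Submodule K V} (hW : Module.finrank K W = 1) :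
    ∃ v, v ≠ 0 ∧ W = span K {v} := by
  obtain ⟨v, hv, hv0⟩ := exists_mem_ne_zero_of_ne_bot fun h : W = ⊥ => by
    rw [h, finrank_bot] at hW; exact zero_ne_one hW
  exact ⟨v, hv0, eq_span_singleton_of_mem_of_finrank_eq_one hW hv hv0⟩

open Module Submodule LinearMap.BilinForm

namespace OiGraph

variable {F : Type*} [Field F] {n : ℕ} {S : Matrix (Fin n) (Fin n) F}

local notation:max W:max "ᗮₛ" => LinearMap.BilinForm.orthogonal (Matrix.toBilin' S) W

theorem mem_orthogonal_iff' {W : Submodule F (Fin n → F)} {x : Fin n → F} :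
    x ∈ Wᗮₛ ↔ ∀ w ∈ W, w ⬝ᵥ S *ᵥ x = 0 := by
  simp only [mem_orthogonal_iff, Matrix.toBilin'_apply']

theorem span_singleton_le_orthogonal_iff (x y : Fin n → F) :
    span F {x} ≤ (span F {y})ᗮₛ ↔ y ⬝ᵥ S *ᵥ x = 0 := by
  rw [span_singleton_le_iff_mem, orthogonal_span_singleton_eq_toLin_ker, LinearMap.mem_ker]
  exact iff_of_eq (congrArg (· = 0) (Matrix.toBilin'_apply' S y x))

theorem dotProduct_mulVec_comm (hS : S.IsSymm) (x y : Fin n → F) :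
    x ⬝ᵥ S *ᵥ y = y ⬝ᵥ S *ᵥ x := by
  simpa only [Matrix.toBilin'_apply'] using (Matrix.isSymm_toBilin'_iff_isSymm.2 hS).eq x y

theorem isRefl_toBilin' (hS : S.IsSymm) : (Matrix.toBilin' S).IsRefl :=
  (Matrix.isSymm_toBilin'_iff_isSymm.2 hS).isRefl

theorem le_orthogonal_comm (hS : S.IsSymm) {U W : Submodule F (Fin n → F)} :
    U ≤ Wᗮₛ ↔ W ≤ Uᗮₛ := by
  have key : ∀ U W : Submodule F (Fin n → F), U ≤ Wᗮₛ → W ≤ Uᗮₛ := fun U W h =>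
    (le_orthogonal_orthogonal (N := W) (isRefl_toBilin' hS)).trans
      (LinearMap.BilinForm.orthogonal_le h)
  exact ⟨key U W, key W U⟩

theorem adj_iff (hS : S.IsSymm) {A B : OiVertex F n} :
    (oiGraph F n S).Adj A B ↔ A ≠ B ∧ A.1 ≤ B.1ᗮₛ := by
  simp only [oiGraph, SetLike.le_def, mem_orthogonal_iff']
  refine and_congr_right fun _ => ⟨fun h a ha b hb => h.2 b hb a ha, fun h => ⟨?_, ?_⟩⟩
  · exact fun a ha b hb => (dotProduct_mulVec_comm hS a b).trans (h ha b hb)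
  · exact fun a ha b hb => h hb a ha

theorem finrank_vertex_pos (A : OiVertex F n) : 0 < finrank F A.1 :=
  Nat.pos_of_ne_zero fun h => A.2.1 (Submodule.finrank_eq_zero.1 h)

theorem finrank_vertex_lt (A : OiVertex F n) : finrank F A.1 < n := by
  simpa using Submodule.finrank_lt A.2.2

def mkVertex (W : Submodule F (Fin n → F)) (h₀ : 0 < finrank F W) (h₁ : finrank F W < n) :
    OiVertex F n :=
  ⟨W, fun h => h₀.ne' (by rw [h, finrank_bot]),
    fun h => h₁.ne (by rw [h, finrank_top, finrank_fin_fun])⟩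

def lineVertex (hn : 2 ≤ n) {v : Fin n → F} (hv : v ≠ 0) : OiVertex F n :=
  mkVertex (span F {v}) (by simp [finrank_span_singleton hv]) (by
    rw [finrank_span_singleton hv]; omega)

theorem finrank_lineVertex (hn : 2 ≤ n) {v : Fin n → F} (hv : v ≠ 0) :
    finrank F (lineVertex hn hv).1 = 1 :=
  finrank_span_singleton hv

theorem lineVertex_le_iff (hn : 2 ≤ n) {v : Fin n → F} (hv : v ≠ 0) {W : Submodule F (Fin n → F)} :
    (lineVertex hn hv).1 ≤ W ↔ v ∈ W :=
  span_singleton_le_iff_mem v W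

theorem finrank_orthogonal_eq_sub (hS₀ : S.Nondegenerate) (W : Submodule F (Fin n → F)) :
    finrank F Wᗮₛ = n - finrank F W := by
  rw [finrank_orthogonal hS₀.toBilin', finrank_fin_fun]

def orthogonalVertex (hS₀ : S.Nondegenerate) (A : OiVertex F n) : OiVertex F n :=
  have := finrank_vertex_pos A
  have := finrank_vertex_lt A
  mkVertex A.1ᗮₛ (by rw [finrank_orthogonal_eq_sub hS₀]; omega)
    (by rw [finrank_orthogonal_eq_sub hS₀]; omega)

theorem dominates_of_le (hS : S.IsSymm) {A B : OiVertex F n} (h : A.1 ≤ B.1) :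
    (oiGraph F n S).Dominates A B := by
  intro W hW
  by_cases hWA : W = A
  · exact .inr hWA
  · rw [adj_iff hS] at hW ⊢
    exact .inl ⟨hWA, hW.2.trans (LinearMap.BilinForm.orthogonal_le h)⟩

theorem le_or_eq_orthogonal_of_dominates (hS : S.IsSymm) (hS₀ : S.Nondegenerate) (hn : 4 ≤ n)
    {A B : OiVertex F n} (h : (oiGraph F n S).Dominates A B) : A.1 ≤ B.1 ∨ B.1 = A.1ᗮₛ := by
  have hrefl := isRefl_toBilin' hS
  by_cases hle : B.1ᗮₛ ≤ A.1ᗮₛ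
  · left
    simpa only [orthogonal_orthogonal hS₀.toBilin' hrefl] using
      LinearMap.BilinForm.orthogonal_le (B := Matrix.toBilin' S) hle
  obtain ⟨v, hvB, hvA⟩ := SetLike.not_le_iff_exists.1 hle
  by_cases hBA : B.1ᗮₛ = A.1
  · right
    rw [← hBA, orthogonal_orthogonal hS₀.toBilin' hrefl]
  by_cases hBB : B.1ᗮₛ = B.1
  · -- `B` is Lagrangian, hence of dimension `n / 2 ≥ 2`, and the line `[v] ≤ B` is adjacent to `B`.
    have hv : v ≠ 0 := by rintro rfl; exact hvA (zero_mem _)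
    have hB := finrank_orthogonal_eq_sub hS₀ B.1
    rw [hBB] at hB
    have hvB' : (lineVertex (by omega) hv).1 ≤ B.1ᗮₛ := (lineVertex_le_iff _ hv).2 hvB
    have hadj : (oiGraph F n S).Adj (lineVertex (by omega) hv) B := by
      refine (adj_iff hS).2 ⟨fun h => ?_, hvB'⟩
      have := finrank_lineVertex (F := F) (show 2 ≤ n by omega) hv
      rw [h] at this
      omega
    rcases h _ hadj with hadj' | heq
    · exact absurd (((adj_iff hS).1 hadj').2 (mem_span_singleton_self v)) hvA
    · left
      rw [← heq, ← hBB]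
      exact hvB'
  · have hadj : (oiGraph F n S).Adj (orthogonalVertex hS₀ B) B :=
      (adj_iff hS).2 ⟨fun h => hBB (congrArg Subtype.val h), le_rfl⟩
    rcases h _ hadj with hadj' | heq
    · exact absurd (((adj_iff hS).1 hadj').2 hvB) hvA
    · exact absurd (congrArg Subtype.val heq) hBA

theorem isDominationMinimal_iff (hS : S.IsSymm) (hS₀ : S.Nondegenerate) (hn : 4 ≤ n)
    {A : OiVertex F n} : (oiGraph F n S).IsDominationMinimal A ↔ finrank F A.1 = 1 := by
  constructor
  · intro h
    obtain ⟨a, haA, ha⟩ := exists_mem_ne_zero_of_ne_bot A.2.1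
    have hline := h (lineVertex (by omega) ha) (dominates_of_le hS ((lineVertex_le_iff _ ha).2 haA))
    rw [← hline, finrank_lineVertex]
  intro hA C hC
  rcases le_or_eq_orthogonal_of_dominates hS hS₀ hn hC with hle | hAC
  · exact Subtype.ext (eq_of_le_of_finrank_le hle (hA ▸ finrank_vertex_pos C))
  -- Otherwise `C = Aᗮ` has dimension `n - 1 ≥ 3`; a line of `C` outside `A` contradicts domination.
  have hCA : C.1 = A.1ᗮₛ := by
    rw [hAC, orthogonal_orthogonal hS₀.toBilin' (isRefl_toBilin' hS)]
  have hC1 : finrank F C.1 = n - 1 := by rw [hCA, finrank_orthogonal_eq_sub hS₀, hA]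
  obtain ⟨w, hwC, hwA⟩ := SetLike.not_le_iff_exists.1 fun hle : C.1 ≤ A.1 => by
    have := finrank_mono hle
    omega
  have hw : w ≠ 0 := by rintro rfl; exact hwA (zero_mem _)
  have hadj : (oiGraph F n S).Adj (lineVertex (by omega) hw) A := by
    refine (adj_iff hS).2 ⟨fun h => hwA ?_, (lineVertex_le_iff _ hw).2 (hCA ▸ hwC)⟩
    exact h ▸ (lineVertex_le_iff _ hw).1 le_rfl
  rcases hC _ hadj with hadj' | heq
  · exact absurd (hAC ▸ ((adj_iff hS).1 hadj').2 (mem_span_singleton_self w)) hwA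
  · have := finrank_lineVertex (F := F) (show 2 ≤ n by omega) hw
    rw [heq, hC1] at this
    omega

theorem le_orthogonal_self_of_dominatesTwoNeighbors (hS : S.IsSymm) (hS₀ : S.Nondegenerate)
    (hn : 4 ≤ n) {A : OiVertex F n} (h : (oiGraph F n S).DominatesTwoNeighbors A) :
    A.1 ≤ A.1ᗮₛ := by
  by_contra hA
  have key : ∀ W, (oiGraph F n S).Adj A W → (oiGraph F n S).Dominates A W → W.1 = A.1ᗮₛ := by
    intro W hadj hdom
    refine (le_or_eq_orthogonal_of_dominates hS hS₀ hn hdom).resolve_left fun hle => hA ?_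
    exact hle.trans ((le_orthogonal_comm hS).1 ((adj_iff hS).1 hadj).2)
  obtain ⟨W₁, W₂, hne, hadj₁, hadj₂, hdom₁, hdom₂⟩ := h
  exact hne (Subtype.ext ((key W₁ hadj₁ hdom₁).trans (key W₂ hadj₂ hdom₂).symm))

theorem dominatesTwoNeighbors_of_le_orthogonal_self (hS : S.IsSymm) (hS₀ : S.Nondegenerate)
    (hn : 4 ≤ n) {A : OiVertex F n} (hA : finrank F A.1 = 1) (hiso : A.1 ≤ A.1ᗮₛ) :
    (oiGraph F n S).DominatesTwoNeighbors A := by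
  -- The two neighbours are `Aᗮ`, of dimension `n - 1 ≥ 3`, and a plane `A ⊔ [w] ≤ Aᗮ`.
  have hA' := finrank_orthogonal_eq_sub hS₀ A.1
  rw [hA] at hA'
  obtain ⟨w, hwA', hwA⟩ := SetLike.not_le_iff_exists.1 fun hle : A.1ᗮₛ ≤ A.1 => by
    have := finrank_mono hle
    omega
  have hw : w ≠ 0 := by rintro rfl; exact hwA (zero_mem _)
  have hP : finrank F ↥(A.1 ⊔ span F {w}) ≤ 2 := by
    have := finrank_add_le_finrank_add_finrank A.1 (span F {w})
    rwa [hA, finrank_span_singleton hw] at this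
  have hPle : A.1 ⊔ span F {w} ≤ A.1ᗮₛ := sup_le hiso ((span_singleton_le_iff_mem w _).2 hwA')
  let P := mkVertex (A.1 ⊔ span F {w})
    ((finrank_vertex_pos A).trans_le (finrank_mono le_sup_left)) (by omega)
  refine ⟨orthogonalVertex hS₀ A, P, fun h => ?_, (adj_iff hS).2 ⟨fun h => ?_, ?_⟩,
    (adj_iff hS).2 ⟨fun h => ?_, (le_orthogonal_comm hS).1 hPle⟩, dominates_of_le hS hiso,
    dominates_of_le hS le_sup_left⟩
  · have := congrArg (fun X : OiVertex F n => finrank F X.1) h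
    change finrank F A.1ᗮₛ = finrank F ↥(A.1 ⊔ span F {w}) at this
    omega
  · have := congrArg (fun X : OiVertex F n => finrank F X.1) h
    change finrank F A.1 = finrank F A.1ᗮₛ at this
    omega
  · exact le_orthogonal_orthogonal (isRefl_toBilin' hS)
  · exact hwA (h ▸ mem_sup_right (mem_span_singleton_self w))

theorem dominatesTwoNeighbors_iff (hS : S.IsSymm) (hS₀ : S.Nondegenerate) (hn : 4 ≤ n)
    {A : OiVertex F n} (hA : finrank F A.1 = 1) :
    (oiGraph F n S).DominatesTwoNeighbors A ↔ A.1 ≤ A.1ᗮₛ :=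
  ⟨le_orthogonal_self_of_dominatesTwoNeighbors hS hS₀ hn,
    dominatesTwoNeighbors_of_le_orthogonal_self hS hS₀ hn hA⟩

theorem finrank_map_eq_one (hS : S.IsSymm) (hS₀ : S.Nondegenerate) (hn : 4 ≤ n)
    (τ : oiGraph F n S ≃g oiGraph F n S) {A : OiVertex F n} (hA : finrank F A.1 = 1) :
    finrank F (τ A).1 = 1 :=
  (isDominationMinimal_iff hS hS₀ hn).1 (((isDominationMinimal_iff hS hS₀ hn).2 hA).map τ)

theorem le_orthogonal_map_iff (hS : S.IsSymm) (hS₀ : S.Nondegenerate) (hn : 4 ≤ n)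
    (τ : oiGraph F n S ≃g oiGraph F n S) {A B : OiVertex F n} (hA : finrank F A.1 = 1) :
    (τ A).1 ≤ (τ B).1ᗮₛ ↔ A.1 ≤ B.1ᗮₛ := by
  by_cases hAB : A = B
  · subst hAB
    rw [← dominatesTwoNeighbors_iff hS hS₀ hn hA,
      ← dominatesTwoNeighbors_iff hS hS₀ hn (finrank_map_eq_one hS hS₀ hn τ hA)]
    refine ⟨fun h => ?_, fun h => h.map τ⟩
    simpa only [RelIso.symm_apply_apply] using h.map τ.symm
  · calc (τ A).1 ≤ (τ B).1ᗮₛ ↔ (oiGraph F n S).Adj (τ A) (τ B) := by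
          rw [adj_iff hS, and_iff_right (τ.injective.ne hAB)]
      _ ↔ (oiGraph F n S).Adj A B := τ.map_adj_iff
      _ ↔ A.1 ≤ B.1ᗮₛ := by rw [adj_iff hS, and_iff_right hAB]

def IsIsometry (S : Matrix (Fin n) (Fin n) F) (f : (Fin n → F) → Fin n → F) : Prop :=
  ∀ x y, f x ⬝ᵥ S *ᵥ f y = x ⬝ᵥ S *ᵥ y

def isometryIso (e : (Fin n → F) ≃ₗ[F] (Fin n → F)) (he : IsIsometry S e) :
    oiGraph F n S ≃g oiGraph F n S where
  toFun A := ⟨A.1.map e.toLinearMap, by simpa only [ne_eq, Submodule.map_eq_bot_iff,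
    Submodule.map_eq_top_iff] using A.2⟩
  invFun A := ⟨A.1.map e.symm.toLinearMap, by simpa only [ne_eq, Submodule.map_eq_bot_iff,
    Submodule.map_eq_top_iff] using A.2⟩
  left_inv A := Subtype.ext ((map_symm_eq_iff e).2 rfl)
  right_inv A := Subtype.ext ((map_symm_eq_iff e).1 rfl)
  map_rel_iff' {A B} := by
    have he' : ∀ x y, e x ⬝ᵥ S *ᵥ e y = x ⬝ᵥ S *ᵥ y := he
    simp only [oiGraph, Equiv.coe_fn_mk, ne_eq, Subtype.mk.injEq, mem_map,
      forall_exists_index, and_imp, forall_apply_eq_imp_iff₂, LinearEquiv.coe_coe, he',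
      (map_injective_of_injective e.injective).eq_iff, Subtype.val_inj]

theorem IsIsometry.symm {e : (Fin n → F) ≃ₗ[F] (Fin n → F)} (he : IsIsometry S e) :
    IsIsometry S e.symm := fun x y => by
  simpa only [LinearEquiv.apply_symm_apply] using (he (e.symm x) (e.symm y)).symm

noncomputable def vecMulEquiv (T : Matrix (Fin n) (Fin n) F) (hT : IsUnit T.det) :
    (Fin n → F) ≃ₗ[F] (Fin n → F) :=
  LinearEquiv.ofLinearMap (Matrix.vecMulLinear T) (Matrix.vecMulLinear T⁻¹)
    (LinearMap.ext fun x => by simp [Matrix.vecMul_vecMul, Matrix.nonsing_inv_mul _ hT])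
    (LinearMap.ext fun x => by simp [Matrix.vecMul_vecMul, Matrix.mul_nonsing_inv _ hT])

theorem isIsometry_vecMul {T : Matrix (Fin n) (Fin n) F} (hT : T * S * Tᵀ = S) :
    IsIsometry S (· ᵥ* T) := fun x y => by
  change (x ᵥ* T) ⬝ᵥ S *ᵥ (y ᵥ* T) = x ⬝ᵥ S *ᵥ y
  rw [← Matrix.mulVec_transpose T y, Matrix.mulVec_mulVec, Matrix.dotProduct_mulVec,
    Matrix.vecMul_vecMul, ← Matrix.mul_assoc, hT, ← Matrix.dotProduct_mulVec]

theorem isUnit_det_of_mul_mul_transpose (hS₀ : S.Nondegenerate) {T : Matrix (Fin n) (Fin n) F}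
    (hT : T * S * Tᵀ = S) : IsUnit T.det := by
  have h := congrArg Matrix.det hT
  rw [Matrix.det_mul, Matrix.det_mul, Matrix.det_transpose] at h
  refine isUnit_iff_ne_zero.2 fun h0 => ?_
  exact (Matrix.nondegenerate_iff_det_ne_zero.1 hS₀) (by rw [← h, h0, zero_mul, zero_mul])

variable {ν : ℕ}

def oiPartner (i : Fin (2*ν+0)) : Fin (2*ν+0) :=
  ⟨if (i : ℕ) < ν then i + ν else i - ν, by split_ifs <;> omega⟩

theorem oiPartner_involutive : Function.Involutive (oiPartner (ν := ν)) := by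
  intro i
  simp only [oiPartner, Fin.ext_iff]
  split_ifs <;> omega

theorem eq_oiPartner_comm {i j : Fin (2*ν+0)} : j = oiPartner i ↔ i = oiPartner j :=
  eq_comm.trans oiPartner_involutive.eq_iff

theorem oiMat_zero_apply (z : F) (i j : Fin (2*ν+0)) :
    oiMat F ν 0 z i j = if j = oiPartner i then 1 else 0 := by
  simp only [oiMat, Matrix.of_apply, oiPartner, Fin.ext_iff]
  split_ifs <;> first | rfl | omega

theorem oiMat_isSymm (z : F) : (oiMat F ν 0 z).IsSymm := by
  ext i j
  simp only [Matrix.transpose_apply, oiMat_zero_apply, eq_oiPartner_comm (i := i)]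

theorem oiMat_mul_self (z : F) : oiMat F ν 0 z * oiMat F ν 0 z = 1 := by
  ext i j
  simp [Matrix.mul_apply, oiMat_zero_apply, Matrix.one_apply, eq_oiPartner_comm (j := j),
    oiPartner_involutive.injective.eq_iff, eq_comm]

theorem oiMat_nondegenerate (z : F) : (oiMat F ν 0 z).Nondegenerate :=
  Matrix.nondegenerate_of_det_ne_zero (Matrix.isUnit_det_of_left_inverse (oiMat_mul_self z)).ne_zero

theorem exists_smul_mul_mul_transpose_eq_oiMat (z : F) (v : Fin (2*ν+0) → Fin (2*ν+0) → F)
    (hv : ∀ i j, v i ⬝ᵥ oiMat F ν 0 z *ᵥ v j = 0 ↔ oiMat F ν 0 z i j = 0) :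
    ∃ c : Fin (2*ν+0) → F, (∀ j, c j ≠ 0) ∧
      Matrix.of (fun j => c j • v j) * oiMat F ν 0 z * (Matrix.of fun j => c j • v j)ᵀ =
        oiMat F ν 0 z := by
  set S := oiMat F ν 0 z
  have hpair : ∀ i, v i ⬝ᵥ S *ᵥ v (oiPartner i) ≠ 0 := fun i h => by
    simpa [S, oiMat_zero_apply] using (hv _ _).1 h
  let c : Fin (2*ν+0) → F := fun j => if (j : ℕ) < ν then 1 else (v (oiPartner j) ⬝ᵥ S *ᵥ v j)⁻¹
  refine ⟨c, fun j => ?_, Matrix.ext fun i j => ?_⟩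
  · have := hpair (oiPartner j)
    rw [oiPartner_involutive] at this
    simp only [c]
    split_ifs <;> simp [this]
  rw [mul_mul_transpose_apply]
  change (c i • v i) ⬝ᵥ S *ᵥ (c j • v j) = S i j
  rw [Matrix.mulVec_smul, dotProduct_smul, smul_dotProduct, smul_eq_mul, smul_eq_mul]
  by_cases hij : j = oiPartner i
  · have hne : v i ⬝ᵥ S *ᵥ v j ≠ 0 := hij ▸ hpair i
    have hji := eq_oiPartner_comm.1 hij
    have hS : S i j = 1 := by simp [S, oiMat_zero_apply, hij]
    have hpartner : (j : ℕ) < ν ↔ ¬ (i : ℕ) < ν := by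
      rw [hij]; simp only [oiPartner]; split_ifs <;> omega
    by_cases hi : (i : ℕ) < ν
    · simp only [c, hi, hpartner.not_left.2 hi, if_true, if_false, ← hji, hS]
      field_simp
    · have hsymm : v j ⬝ᵥ S *ᵥ v i = v i ⬝ᵥ S *ᵥ v j := dotProduct_mulVec_comm (oiMat_isSymm z) _ _
      simp only [c, hi, hpartner.2 hi, if_true, if_false, ← hij, hS, hsymm]
      field_simp
  · have hS : S i j = 0 := by simp [S, oiMat_zero_apply, hij]
    rw [hS, (hv i j).2 hS, mul_zero, mul_zero]

end OiGraph

open OiGraph in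
theorem stmt7_general (F : Type*) [Field F]
    (ν : ℕ) (hν : 2 ≤ ν)
    (τ : (oiGraph F (2*ν+0) (oiMat F ν 0 1)) ≃g (oiGraph F (2*ν+0) (oiMat F ν 0 1))) :
    ∃ T : Matrix (Fin (2*ν+0)) (Fin (2*ν+0)) F,
      T * oiMat F ν 0 1 * Tᵀ = oiMat F ν 0 1 ∧
      ∃ ρ : (oiGraph F (2*ν+0) (oiMat F ν 0 1)) ≃g (oiGraph F (2*ν+0) (oiMat F ν 0 1)),
        (∀ (j : Fin (2*ν+0)) (X : OiVertex F (2*ν+0)),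
            X.1 = Submodule.span F {Pi.single j 1} → ρ X = X) ∧
        ∀ W : OiVertex F (2*ν+0),
          ((τ W).1 : Submodule F (Fin (2*ν+0) → F)) =
            ((ρ W).1).map (Matrix.vecMulLinear T) := by
  have hn : 4 ≤ 2*ν+0 := by omega
  have hS := oiMat_isSymm (F := F) (ν := ν) 1
  have hS₀ := oiMat_nondegenerate (F := F) (ν := ν) 1
  have hsingle (j : Fin (2*ν+0)) : (Pi.single j 1 : Fin (2*ν+0) → F) ≠ 0 := by simp
  let E j := lineVertex (F := F) (by omega) (hsingle j)
  have hE j : finrank F (E j).1 = 1 := finrank_lineVertex _ _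
  have hEspan j : (E j).1 = span F {Pi.single j 1} := rfl
  choose v hv hvE using fun j =>
    exists_eq_span_singleton_of_finrank_eq_one (finrank_map_eq_one hS hS₀ hn τ (hE j))
  obtain ⟨c, hc, hT⟩ := exists_smul_mul_mul_transpose_eq_oiMat 1 v fun i j => by
    rw [← span_singleton_le_orthogonal_iff, ← hvE, ← hvE, le_orthogonal_map_iff hS hS₀ hn τ (hE j),
      hEspan, hEspan, span_singleton_le_orthogonal_iff]
    simp
  set T := Matrix.of fun j => c j • v j
  let e := vecMulEquiv T (isUnit_det_of_mul_mul_transpose hS₀ hT)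
  have hτE j : (τ (E j)).1 = (E j).1.map e.toLinearMap := by
    have : e (Pi.single j 1) = c j • v j := Matrix.single_one_vecMul j T
    rw [hvE, hEspan, map_span, Set.image_singleton, LinearEquiv.coe_coe, this,
      span_singleton_smul_eq (hc j).isUnit]
  refine ⟨T, hT, τ.trans (isometryIso e.symm (isIsometry_vecMul hT).symm),
    fun j X hX => ?_, fun W => ((map_symm_eq_iff e).1 rfl).symm⟩
  obtain rfl : X = E j := Subtype.ext hX
  exact Subtype.ext ((map_symm_eq_iff e).2 (hτE j).symm)

/-- For `ν ≥ 2`, `δ = 0`: every automorphism `τ` of `Oi(2ν, q)` factors as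
`τ = σ_T ∘ ρ` where `T ∈ O_{2ν}(F)` and `ρ` fixes all the coordinate lines
`[e_i]`, `[f_i] = [e_{ν+i}]` (`1 ≤ i ≤ ν`). -/
theorem stmt7 (F : Type*) [Field F] [Fintype F] (hF : ringChar F ≠ 2)
    (ν : ℕ) (hν : 2 ≤ ν)
    (τ : (oiGraph F (2*ν+0) (oiMat F ν 0 1)) ≃g (oiGraph F (2*ν+0) (oiMat F ν 0 1))) :
    ∃ T : Matrix (Fin (2*ν+0)) (Fin (2*ν+0)) F,
      T * oiMat F ν 0 1 * Tᵀ = oiMat F ν 0 1 ∧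
      ∃ ρ : (oiGraph F (2*ν+0) (oiMat F ν 0 1)) ≃g (oiGraph F (2*ν+0) (oiMat F ν 0 1)),
        (∀ (j : Fin (2*ν+0)) (X : OiVertex F (2*ν+0)),
            X.1 = Submodule.span F {Pi.single j 1} → ρ X = X) ∧
        ∀ W : OiVertex F (2*ν+0),
          ((τ W).1 : Submodule F (Fin (2*ν+0) → F)) =
            ((ρ W).1).map (Matrix.vecMulLinear T) :=
  stmt7_general F ν hν τ
end
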